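/- arXiv:1102.2813 — 2 statements merged into one kernel-verified Lean document; each statement's English description precedes it below -/
import Mathlib

section
/- Let Z be a finite-dimensional vector subspace of formal power series in n variables. Then the restriction of the standard sesquilinear form S to Z↓ × Z is non-degenerate: no nonzero element of Z annihilates all of Z↓, and no nonzero element of Z↓ annihilates all of Z. -/
noncomputable def degF {n : ℕ} (ν : Fin n →₀ ℕ) : ℕ := ν.sum fun _ k => k

noncomputable def pairS {n : ℕ} (p : MvPolynomial (Fin n) ℂ) (f : MvPowerSeries (Fin n) ℂ) : ℂ :=
  ∑ ν ∈ p.support,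
    ((∏ i, Nat.factorial (ν i) : ℕ) : ℂ) * MvPolynomial.coeff ν p *
      (starRingEnd ℂ) (MvPowerSeries.coeff ν f)

noncomputable def leastPartD {n : ℕ} (f : MvPowerSeries (Fin n) ℂ) (d : ℕ) :
    MvPolynomial (Fin n) ℂ :=
  ∑ ν ∈ (Finset.Iic ((Finsupp.equivFunOnFinite.symm fun _ => d) : Fin n →₀ ℕ)).filter
      (fun ν => degF ν = d),
    MvPolynomial.monomial ν (MvPowerSeries.coeff ν f)

noncomputable def ordPS {n : ℕ} (f : MvPowerSeries (Fin n) ℂ) : ℕ :=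
  sInf {d | ∃ ν, degF ν = d ∧ MvPowerSeries.coeff ν f ≠ 0}

noncomputable def leastPart {n : ℕ} (f : MvPowerSeries (Fin n) ℂ) : MvPolynomial (Fin n) ℂ :=
  leastPartD f (ordPS f)

noncomputable def leastSpace {n : ℕ} (Z : Submodule ℂ (MvPowerSeries (Fin n) ℂ)) :
    Submodule ℂ (MvPolynomial (Fin n) ℂ) :=
  Submodule.span ℂ (leastPart '' (Z : Set (MvPowerSeries (Fin n) ℂ)))

def DInvP {n : ℕ} (W : Submodule ℂ (MvPolynomial (Fin n) ℂ)) : Prop :=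
  ∀ p ∈ W, ∀ i, MvPolynomial.pderiv i p ∈ W

noncomputable def pderivPS {n : ℕ} (i : Fin n) (f : MvPowerSeries (Fin n) ℂ) :
    MvPowerSeries (Fin n) ℂ :=
  fun ν => ((ν i + 1 : ℕ) : ℂ) * MvPowerSeries.coeff (ν + Finsupp.single i 1) f

/-!
If `g` vanishes below degree `D` and agrees with `p` in degree `D`, while `p` has degree at most
`D`, then `S(p, g) = ∑_{|ν| = D} ν! |p_ν|²`, which is nonzero as soon as `p` has a term of degree
`D`. For `f ∈ Z` apply this to `p = f↓`, `g = f`, `D = ord f`. For `p ∈ Z↓` take `D = deg p`: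
the degree-`D` part of `p` is a combination of least parts of elements of `Z` of order `D`, and
the same combination of those elements is the required `g ∈ Z`.
-/

lemma degF_eq_degree {n : ℕ} (ν : Fin n →₀ ℕ) : degF ν = ν.degree := rfl

lemma coeff_leastPartD {n : ℕ} (f : MvPowerSeries (Fin n) ℂ) (d : ℕ) (μ : Fin n →₀ ℕ) :
    MvPolynomial.coeff μ (leastPartD f d)
      = if degF μ = d then MvPowerSeries.coeff μ f else 0 := by
  have hIic : degF μ = d → μ ≤ Finsupp.equivFunOnFinite.symm fun _ => d := fun h i => by
    subst h
    simpa [degF_eq_degree] using Finsupp.le_degree i μ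
  simp only [leastPartD, MvPolynomial.coeff_sum, MvPolynomial.coeff_monomial,
    Finset.sum_ite_eq', Finset.mem_filter, Finset.mem_Iic]
  by_cases h : degF μ = d <;> simp [h, hIic]

lemma coeff_leastPart {n : ℕ} (f : MvPowerSeries (Fin n) ℂ) (μ : Fin n →₀ ℕ) :
    MvPolynomial.coeff μ (leastPart f)
      = if degF μ = ordPS f then MvPowerSeries.coeff μ f else 0 :=
  coeff_leastPartD f _ μ

lemma exists_coeff_ne_zero_of_degF_eq_ordPS {n : ℕ} {f : MvPowerSeries (Fin n) ℂ}
    (hf : f ≠ 0) :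
    ∃ ν, degF ν = ordPS f ∧ MvPowerSeries.coeff ν f ≠ 0 := by
  obtain ⟨ν, hν⟩ : ∃ ν, MvPowerSeries.coeff ν f ≠ 0 := by
    by_contra! h
    exact hf (MvPowerSeries.ext h)
  exact Nat.sInf_mem (s := {d | ∃ ν, degF ν = d ∧ MvPowerSeries.coeff ν f ≠ 0})
    ⟨_, ν, rfl, hν⟩

lemma coeff_eq_zero_of_degF_lt_ordPS {n : ℕ} {f : MvPowerSeries (Fin n) ℂ} {ν : Fin n →₀ ℕ}
    (hν : degF ν < ordPS f) : MvPowerSeries.coeff ν f = 0 := by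
  by_contra h
  exact (Nat.sInf_le (s := {d | ∃ ν, degF ν = d ∧ MvPowerSeries.coeff ν f ≠ 0})
    ⟨ν, rfl, h⟩).not_gt hν

lemma pairS_eq_sum_normSq {n : ℕ} {p : MvPolynomial (Fin n) ℂ} {g : MvPowerSeries (Fin n) ℂ}
    {D : ℕ} (hle : ∀ ν ∈ p.support, degF ν ≤ D)
    (hlt : ∀ ν, degF ν < D → MvPowerSeries.coeff ν g = 0)
    (heq : ∀ ν, degF ν = D → MvPowerSeries.coeff ν g = MvPolynomial.coeff ν p) :
    pairS p g = ((∑ ν ∈ p.support with degF ν = D, ((∏ i, Nat.factorial (ν i) : ℕ) : ℝ) *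
      Complex.normSq (MvPolynomial.coeff ν p) : ℝ) : ℂ) := by
  rw [Finset.sum_filter, Complex.ofReal_sum, pairS]
  refine Finset.sum_congr rfl fun ν hν => ?_
  split_ifs with h
  · rw [heq ν h, mul_assoc, Complex.mul_conj]
    push_cast
    ring
  · simp [hlt ν ((hle ν hν).lt_of_ne h)]

lemma pairS_ne_zero {n : ℕ} {p : MvPolynomial (Fin n) ℂ} {g : MvPowerSeries (Fin n) ℂ}
    {D : ℕ} (hle : ∀ ν ∈ p.support, degF ν ≤ D)
    (hlt : ∀ ν, degF ν < D → MvPowerSeries.coeff ν g = 0)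
    (heq : ∀ ν, degF ν = D → MvPowerSeries.coeff ν g = MvPolynomial.coeff ν p)
    (htop : ∃ ν ∈ p.support, degF ν = D) :
    pairS p g ≠ 0 := by
  rw [pairS_eq_sum_normSq hle hlt heq, Complex.ofReal_ne_zero]
  refine (Finset.sum_pos (fun ν hν => mul_pos ?_ ?_) ?_).ne'
  · exact_mod_cast Finset.prod_pos fun i _ => (ν i).factorial_pos
  · exact Complex.normSq_pos.mpr
      (MvPolynomial.mem_support_iff.mp (Finset.mem_filter.mp hν).1)
  · obtain ⟨ν, hν, hD⟩ := htop
    exact ⟨ν, Finset.mem_filter.mpr ⟨hν, hD⟩⟩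

lemma pairS_leastPart_self_ne_zero {n : ℕ} {f : MvPowerSeries (Fin n) ℂ} (hf : f ≠ 0) :
    pairS (leastPart f) f ≠ 0 := by
  obtain ⟨ν₀, hν₀, hcoeff⟩ := exists_coeff_ne_zero_of_degF_eq_ordPS hf
  refine pairS_ne_zero (D := ordPS f) (fun ν hν => ?_)
    (fun ν => coeff_eq_zero_of_degF_lt_ordPS) (fun ν hν => by rw [coeff_leastPart, if_pos hν])
    ⟨ν₀, ?_, hν₀⟩
  · rw [MvPolynomial.mem_support_iff, coeff_leastPart] at hν
    exact (of_not_not fun h => hν (if_neg h)).le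
  · rwa [MvPolynomial.mem_support_iff, coeff_leastPart, if_pos hν₀]

lemma exists_mem_coeff_eq_of_mem_leastSpace {n : ℕ}
    {Z : Submodule ℂ (MvPowerSeries (Fin n) ℂ)} {p : MvPolynomial (Fin n) ℂ}
    (hp : p ∈ leastSpace Z) (D : ℕ) :
    ∃ g ∈ Z, (∀ ν, degF ν < D → MvPowerSeries.coeff ν g = 0) ∧
      (∀ ν, degF ν = D → MvPowerSeries.coeff ν g = MvPolynomial.coeff ν p) := by
  induction hp using Submodule.span_induction with
  | mem q hq =>
    obtain ⟨f, hfZ, rfl⟩ := hq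
    by_cases hD : D = ordPS f
    · subst hD
      exact ⟨f, hfZ, fun ν => coeff_eq_zero_of_degF_lt_ordPS,
        fun ν hν => by rw [coeff_leastPart, if_pos hν]⟩
    · refine ⟨0, Z.zero_mem, fun ν _ => map_zero _, fun ν hν => ?_⟩
      rw [coeff_leastPart, if_neg (hν ▸ hD), map_zero]
  | zero => exact ⟨0, Z.zero_mem, fun ν _ => map_zero _, fun ν _ => by simp⟩
  | add q r _ _ ihq ihr =>
    obtain ⟨g, hgZ, hg₁, hg₂⟩ := ihq
    obtain ⟨h, hhZ, hh₁, hh₂⟩ := ihr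
    refine ⟨g + h, Z.add_mem hgZ hhZ, fun ν hν => ?_, fun ν hν => ?_⟩
    · rw [map_add, hg₁ ν hν, hh₁ ν hν, add_zero]
    · rw [map_add, hg₂ ν hν, hh₂ ν hν, MvPolynomial.coeff_add]
  | smul c q _ ihq =>
    obtain ⟨g, hgZ, hg₁, hg₂⟩ := ihq
    refine ⟨c • g, Z.smul_mem c hgZ, fun ν hν => ?_, fun ν hν => ?_⟩
    · rw [map_smul, hg₁ ν hν, smul_zero]
    · rw [map_smul, hg₂ ν hν, MvPolynomial.coeff_smul]

theorem stmt8_general {n : ℕ} (Z : Submodule ℂ (MvPowerSeries (Fin n) ℂ)) :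
    (∀ f ∈ Z, (∀ p ∈ leastSpace Z, pairS p f = 0) → f = 0) ∧
    (∀ p ∈ leastSpace Z, (∀ f ∈ Z, pairS p f = 0) → p = 0) := by
  constructor
  · intro f hfZ hpair
    by_contra hf
    exact pairS_leastPart_self_ne_zero hf (hpair _ (Submodule.subset_span ⟨f, hfZ, rfl⟩))
  · intro p hp hpair
    by_contra hp₀
    obtain ⟨ν₀, hν₀, hD⟩ := Finset.exists_mem_eq_sup p.support
      (MvPolynomial.support_nonempty.mpr hp₀) degF
    obtain ⟨g, hgZ, hg₁, hg₂⟩ :=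
      exists_mem_coeff_eq_of_mem_leastSpace hp (p.support.sup degF)
    exact pairS_ne_zero (fun ν hν => Finset.le_sup hν) hg₁ hg₂ ⟨ν₀, hν₀, hD.symm⟩
      (hpair g hgZ)

/-- de Boor–Ron: the restriction of S to Z↓ × Z is non-degenerate. -/
theorem stmt8 {n : ℕ} (Z : Submodule ℂ (MvPowerSeries (Fin n) ℂ))
    [FiniteDimensional ℂ Z] :
    (∀ f ∈ Z, (∀ p ∈ leastSpace Z, pairS p f = 0) → f = 0) ∧
    (∀ p ∈ leastSpace Z, (∀ f ∈ Z, pairS p f = 0) → p = 0) :=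
  stmt8_general Z
end

section
/- Let Z be a finite-dimensional subspace of formal power series and Z↓ its least space. If the annihilator (Z↓)^⊥ with respect to the standard sesquilinear pairing is an ideal of the formal power series ring C[[t]], then Z↓ is D-invariant (closed under all partial derivatives ∂/∂τ_i). -/
open MvPolynomial

variable {n : ℕ}

lemma pairS_eq_sum_of_support_subset (p : MvPolynomial (Fin n) ℂ) (f : MvPowerSeries (Fin n) ℂ)
    {s : Finset (Fin n →₀ ℕ)} (hs : p.support ⊆ s) :
    pairS p f = ∑ ν ∈ s,
      ((∏ i, (ν i).factorial : ℕ) : ℂ) * coeff ν p * starRingEnd ℂ (MvPowerSeries.coeff ν f) :=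
  Finset.sum_subset hs fun ν _ hν => by simp [notMem_support_iff.mp hν]

lemma pairS_add (p q : MvPolynomial (Fin n) ℂ) (f : MvPowerSeries (Fin n) ℂ) :
    pairS (p + q) f = pairS p f + pairS q f := by
  rw [pairS_eq_sum_of_support_subset p f Finset.subset_union_left,
    pairS_eq_sum_of_support_subset q f Finset.subset_union_right,
    pairS_eq_sum_of_support_subset (p + q) f support_add, ← Finset.sum_add_distrib]
  refine Finset.sum_congr rfl fun ν _ => ?_
  rw [coeff_add]
  ring

lemma pairS_monomial (ν : Fin n →₀ ℕ) (c : ℂ) (f : MvPowerSeries (Fin n) ℂ) :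
    pairS (monomial ν c) f =
      ((∏ i, (ν i).factorial : ℕ) : ℂ) * c * starRingEnd ℂ (MvPowerSeries.coeff ν f) := by
  rw [pairS_eq_sum_of_support_subset _ f support_monomial_subset, Finset.sum_singleton,
    coeff_monomial, if_pos rfl]

lemma exists_pairS_eq (ψ : MvPolynomial (Fin n) ℂ →ₗ[ℂ] ℂ) :
    ∃ f : MvPowerSeries (Fin n) ℂ, ∀ p, pairS p f = ψ p := by
  let f : MvPowerSeries (Fin n) ℂ :=
    fun ν => starRingEnd ℂ (ψ (monomial ν 1) / ((∏ i, (ν i).factorial : ℕ) : ℂ))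
  refine ⟨f, fun p => ?_⟩
  induction p using MvPolynomial.induction_on' with
  | monomial ν c =>
    have hfact : ((∏ i, (ν i).factorial : ℕ) : ℂ) ≠ 0 :=
      Nat.cast_ne_zero.mpr (Finset.prod_ne_zero_iff.mpr fun i _ => (ν i).factorial_ne_zero)
    have hmonomial : monomial ν c = c • monomial ν (1 : ℂ) := by
      rw [smul_monomial, smul_eq_mul, mul_one]
    rw [pairS_monomial, MvPowerSeries.coeff_apply, Complex.conj_conj, hmonomial, map_smul,
      smul_eq_mul]
    field_simp
  | add p q hp hq => rw [pairS_add, hp, hq, map_add]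

theorem mem_of_forall_pairS_eq_zero {W : Submodule ℂ (MvPolynomial (Fin n) ℂ)}
    {q : MvPolynomial (Fin n) ℂ}
    (h : ∀ f : MvPowerSeries (Fin n) ℂ, (∀ p ∈ W, pairS p f = 0) → pairS q f = 0) :
    q ∈ W := by
  by_contra hq
  obtain ⟨ψ, hψq, hWψ⟩ := Submodule.exists_le_ker_of_notMem hq
  obtain ⟨f, hf⟩ := exists_pairS_eq ψ
  exact hψq <| hf q ▸ h f fun p hp => (hf p).trans (hWψ hp)

lemma factorial_prod_tsub_single {ν : Fin n →₀ ℕ} {i : Fin n} (hν : ν i ≠ 0) :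
    ν i * ∏ j, ((ν - Finsupp.single i 1 : Fin n →₀ ℕ) j).factorial =
      ∏ j, (ν j).factorial := by
  rw [← Finset.mul_prod_erase _ _ (Finset.mem_univ i),
    ← Finset.mul_prod_erase _ (fun j => (ν j).factorial) (Finset.mem_univ i), ← mul_assoc]
  congr 1
  · rw [Finsupp.tsub_apply, Finsupp.single_eq_same, Nat.mul_factorial_pred hν]
  · refine Finset.prod_congr rfl fun j hj => ?_
    rw [Finsupp.tsub_apply, Finsupp.single_eq_of_ne (Finset.ne_of_mem_erase hj), Nat.sub_zero]

lemma pairS_pderiv (i : Fin n) (p : MvPolynomial (Fin n) ℂ) (f : MvPowerSeries (Fin n) ℂ) :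
    pairS (pderiv i p) f = pairS p (MvPowerSeries.X i * f) := by
  induction p using MvPolynomial.induction_on' with
  | monomial ν c =>
    rw [pderiv_monomial, pairS_monomial, pairS_monomial, MvPowerSeries.X_def,
      MvPowerSeries.coeff_monomial_mul]
    by_cases hν : ν i = 0
    · have hle : ¬ Finsupp.single i 1 ≤ ν := fun hle => by simpa [hν] using hle i
      simp [hν, hle]
    · have hle : Finsupp.single i 1 ≤ ν :=
        Finsupp.single_le_iff.mpr (Nat.one_le_iff_ne_zero.mpr hν)
      rw [if_pos hle, one_mul, ← factorial_prod_tsub_single hν]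
      push_cast
      ring
  | add p q hp hq => rw [map_add, pairS_add, pairS_add, hp, hq]

theorem dInvP_of_annihilator_eq_ideal {W : Submodule ℂ (MvPolynomial (Fin n) ℂ)}
    {I : Ideal (MvPowerSeries (Fin n) ℂ)}
    (hI : (I : Set (MvPowerSeries (Fin n) ℂ)) = {f | ∀ p ∈ W, pairS p f = 0}) :
    DInvP W := by
  intro p hp i
  refine mem_of_forall_pairS_eq_zero fun f hf => ?_
  have hXf : MvPowerSeries.X i * f ∈ (I : Set (MvPowerSeries (Fin n) ℂ)) :=
    I.mul_mem_left _ (show f ∈ (I : Set _) from hI ▸ hf)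
  rw [hI] at hXf
  rw [pairS_pderiv]
  exact hXf p hp

theorem stmt10_general {n : ℕ} (Z : Submodule ℂ (MvPowerSeries (Fin n) ℂ))
    (hIdeal : ∃ I : Ideal (MvPowerSeries (Fin n) ℂ),
      (I : Set (MvPowerSeries (Fin n) ℂ)) = {f | ∀ p ∈ leastSpace Z, pairS p f = 0}) :
    DInvP (leastSpace Z) :=
  let ⟨_, hI⟩ := hIdeal
  dInvP_of_annihilator_eq_ideal hI

/-- if the annihilator of Z↓ is an ideal of C[[t]] then Z↓ is D-invariant. -/
theorem stmt10 {n : ℕ} (Z : Submodule ℂ (MvPowerSeries (Fin n) ℂ))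
    [FiniteDimensional ℂ Z]
    (hIdeal : ∃ I : Ideal (MvPowerSeries (Fin n) ℂ),
      (I : Set (MvPowerSeries (Fin n) ℂ)) = {f | ∀ p ∈ leastSpace Z, pairS p f = 0}) :
    DInvP (leastSpace Z) :=
  stmt10_general Z hIdeal
end
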